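/- Let U : X ⇝ Y and V = f(U) : X ⇝ Z with partitions Y = A ⊔ B, Z = A' ⊔ B' such that f restricted to A is a bijection onto A'. Suppose for every x, Pr_{U(y|x)}[y ∈ B] ≤ β̄. Then for every input distribution p on X, I(U,p) − I(V,p) ≤ β̄ log₂|X| + 1/(e ln 2). -/
import Mathlib

set_option maxHeartbeats 1000000

private lemma log_le_div_exp {s : ℝ} (hs : 0 < s) : Real.log s ≤ s / Real.exp 1 := by
  have h := Real.add_one_le_exp (Real.log s - 1)
  rw [Real.exp_sub, Real.exp_log hs] at h
  linarith

private lemma neg_inv_exp_le_mul_log {t : ℝ} (h0 : 0 ≤ t) :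
    -(Real.exp 1)⁻¹ ≤ t * Real.log t := by
  rcases h0.eq_or_lt with h | h
  · rw [← h, zero_mul]
    exact neg_nonpos.mpr (inv_nonneg.mpr (Real.exp_pos 1).le)
  · have h1 : Real.log t⁻¹ ≤ t⁻¹ / Real.exp 1 := log_le_div_exp (by positivity)
    rw [Real.log_inv] at h1
    have h2 : t * -Real.log t ≤ t * (t⁻¹ / Real.exp 1) := mul_le_mul_of_nonneg_left h1 h.le
    have h3 : t * (t⁻¹ / Real.exp 1) = (Real.exp 1)⁻¹ := by
      field_simp
    rw [h3, mul_neg] at h2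
    linarith

private lemma key_lb {a b : ℝ} (ha : 0 ≤ a) (hb : 0 < b) :
    -(b * (1 / (Real.exp 1 * Real.log 2))) ≤ a * Real.logb 2 (a / b) := by
  have hlog2 : (0:ℝ) < Real.log 2 := Real.log_pos one_lt_two
  have he : (0:ℝ) < Real.exp 1 := Real.exp_pos 1
  have ht := neg_inv_exp_le_mul_log (t := a / b) (by positivity)
  have h2 : b * -(Real.exp 1)⁻¹ ≤ b * (a / b * Real.log (a / b)) :=
    mul_le_mul_of_nonneg_left ht hb.le
  have h3 : b * (a / b * Real.log (a / b)) = a * Real.log (a / b) := by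
    field_simp
  rw [h3] at h2
  rw [← Real.log_div_log]
  have h4 : -(b * (1 / (Real.exp 1 * Real.log 2))) = (b * -(Real.exp 1)⁻¹) / Real.log 2 := by
    field_simp
  have h5 : a * (Real.log (a / b) / Real.log 2) = (a * Real.log (a / b)) / Real.log 2 := by
    ring
  rw [h5, h4]
  gcongr

private lemma key_ub {a b : ℝ} (ha : 0 ≤ a) (hab : a ≤ b) (hb : 0 < b) :
    a * Real.logb 2 (a / b) ≤ 0 := by
  have h : Real.logb 2 (a / b) ≤ 0 :=
    Real.logb_nonpos one_lt_two (by positivity) ((div_le_one hb).mpr hab)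
  nlinarith

private lemma key_abs {a b : ℝ} (ha : 0 ≤ a) (hab : a ≤ b) (hb : 0 < b) :
    |a * Real.logb 2 (a / b)| ≤ b * (1 / (Real.exp 1 * Real.log 2)) := by
  have hlog2 : (0:ℝ) < Real.log 2 := Real.log_pos one_lt_two
  have he : (0:ℝ) < Real.exp 1 := Real.exp_pos 1
  rw [abs_le]
  constructor
  · exact key_lb ha hb
  · have hk : 0 ≤ b * (1 / (Real.exp 1 * Real.log 2)) := by positivity
    linarith [key_ub ha hab hb]

/-- Output distribution `p•W`. -/
noncomputable def outDist {X Y : Type*} (W : X → Y → ℝ) (p : X → ℝ) (y : Y) : ℝ :=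
  ∑' x, p x * W x y

/-- Mutual information density `i(W,p,x,y)`. -/
noncomputable def iDen {X Y : Type*} (W : X → Y → ℝ) (p : X → ℝ) (x : X) (y : Y) : ℝ :=
  if W x y = 0 ∨ outDist W p y = 0 then 0
  else Real.logb 2 (W x y / outDist W p y)

/-- Mutual information `I(W,p)`. -/
noncomputable def MI {X Y : Type*} (W : X → Y → ℝ) (p : X → ℝ) : ℝ :=
  ∑' xy : X × Y, p xy.1 * W xy.1 xy.2 * iDen W p xy.1 xy.2

/-- The degraded channel `f(W)`. -/
noncomputable def degrade {X Y Z : Type*} (W : X → Y → ℝ) (f : Y → Z) (x : X) (z : Z) : ℝ :=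
  ∑' y : (f ⁻¹' {z}), W x y

private lemma outDist_eq {X Y : Type*} [Fintype X] (W : X → Y → ℝ) (p : X → ℝ) (y : Y) :
    outDist W p y = ∑ x, p x * W x y := tsum_fintype _

private lemma le_outDist {X Y : Type*} [Fintype X] (W : X → Y → ℝ) (p : X → ℝ)
    (hW0 : ∀ x y, 0 ≤ W x y) (hp0 : ∀ x, 0 ≤ p x) (x : X) (y : Y) :
    p x * W x y ≤ outDist W p y := by
  rw [outDist_eq]
  exact Finset.single_le_sum (fun i _ => mul_nonneg (hp0 i) (hW0 i y)) (Finset.mem_univ x)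

private lemma outDist_nonneg {X Y : Type*} [Fintype X] (W : X → Y → ℝ) (p : X → ℝ)
    (hW0 : ∀ x y, 0 ≤ W x y) (hp0 : ∀ x, 0 ≤ p x) (y : Y) :
    0 ≤ outDist W p y := by
  rw [outDist_eq]
  exact Finset.sum_nonneg fun i _ => mul_nonneg (hp0 i) (hW0 i y)

private lemma term_le {X Y : Type*} [Fintype X] (W : X → Y → ℝ) (p : X → ℝ)
    (hW0 : ∀ x y, 0 ≤ W x y) (hp0 : ∀ x, 0 ≤ p x) (hple : ∀ x, p x ≤ 1) (x : X) (y : Y) :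
    p x * W x y * iDen W p x y ≤
      p x * W x y * (if p x = 0 then 0 else -Real.logb 2 (p x)) := by
  have hpWle := le_outDist W p hW0 hp0 x y
  by_cases hpx : p x = 0
  · simp [hpx]
  have hppos : 0 < p x := (hp0 x).lt_of_ne (Ne.symm hpx)
  have hcnn : 0 ≤ -Real.logb 2 (p x) := by
    have := Real.logb_nonpos (b := 2) one_lt_two (hp0 x) (hple x)
    linarith
  rw [if_neg hpx]
  by_cases hcond : W x y = 0 ∨ outDist W p y = 0
  · rw [iDen, if_pos hcond, mul_zero]
    exact mul_nonneg (mul_nonneg (hp0 x) (hW0 x y)) hcnn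
  · push_neg at hcond
    obtain ⟨hW, ho⟩ := hcond
    have hWpos : 0 < W x y := (hW0 x y).lt_of_ne (Ne.symm hW)
    have hopos : 0 < outDist W p y := (outDist_nonneg W p hW0 hp0 y).lt_of_ne (Ne.symm ho)
    rw [iDen, if_neg (by push_neg; exact ⟨hW, ho⟩)]
    have hsplit : Real.logb 2 (W x y / outDist W p y)
        = Real.logb 2 (p x * W x y / outDist W p y) - Real.logb 2 (p x) := by
      rw [mul_div_assoc, Real.logb_mul hpx (by positivity : W x y / outDist W p y ≠ 0)]
      ring
    have h1 : Real.logb 2 (p x * W x y / outDist W p y) ≤ 0 :=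
      Real.logb_nonpos one_lt_two (by positivity) ((div_le_one hopos).mpr hpWle)
    rw [hsplit]
    nlinarith [mul_nonneg (hp0 x) (hW0 x y)]

private lemma term_abs_le {X Y : Type*} [Fintype X] (W : X → Y → ℝ) (p : X → ℝ)
    (hW0 : ∀ x y, 0 ≤ W x y) (hp0 : ∀ x, 0 ≤ p x) (hple : ∀ x, p x ≤ 1) (x : X) (y : Y) :
    |p x * W x y * iDen W p x y| ≤
      outDist W p y * (1 / (Real.exp 1 * Real.log 2)
        + (if p x = 0 then 0 else -Real.logb 2 (p x))) := by
  have hlog2 : (0:ℝ) < Real.log 2 := Real.log_pos one_lt_two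
  have he : (0:ℝ) < Real.exp 1 := Real.exp_pos 1
  have hpWle := le_outDist W p hW0 hp0 x y
  have ho0 := outDist_nonneg W p hW0 hp0 y
  have hcnn : 0 ≤ (if p x = 0 then 0 else -Real.logb 2 (p x)) := by
    by_cases hpx : p x = 0
    · simp [hpx]
    · rw [if_neg hpx]
      have := Real.logb_nonpos (b := 2) one_lt_two (hp0 x) (hple x)
      linarith
  have hrhs0 : 0 ≤ outDist W p y * (1 / (Real.exp 1 * Real.log 2)
      + (if p x = 0 then 0 else -Real.logb 2 (p x))) := by
    apply mul_nonneg ho0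
    have : (0:ℝ) ≤ 1 / (Real.exp 1 * Real.log 2) := by positivity
    linarith
  by_cases hcond : W x y = 0 ∨ outDist W p y = 0
  · rw [iDen, if_pos hcond, mul_zero, abs_zero]
    exact hrhs0
  by_cases hpx : p x = 0
  · have hz : p x * W x y * iDen W p x y = 0 := by rw [hpx]; ring
    rw [hz, abs_zero]
    exact hrhs0
  · push_neg at hcond
    obtain ⟨hW, ho⟩ := hcond
    have hppos : 0 < p x := (hp0 x).lt_of_ne (Ne.symm hpx)
    have hWpos : 0 < W x y := (hW0 x y).lt_of_ne (Ne.symm hW)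
    have hopos : 0 < outDist W p y := ho0.lt_of_ne (Ne.symm ho)
    rw [iDen, if_neg (by push_neg; exact ⟨hW, ho⟩), if_neg hpx]
    have hsplit : Real.logb 2 (W x y / outDist W p y)
        = Real.logb 2 (p x * W x y / outDist W p y) - Real.logb 2 (p x) := by
      rw [mul_div_assoc, Real.logb_mul hpx (by positivity : W x y / outDist W p y ≠ 0)]
      ring
    rw [hsplit]
    have e1 : p x * W x y * (Real.logb 2 (p x * W x y / outDist W p y) - Real.logb 2 (p x))
        = p x * W x y * Real.logb 2 (p x * W x y / outDist W p y)
          + p x * W x y * (-Real.logb 2 (p x)) := by ring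
    rw [e1]
    have habs1 : |p x * W x y * Real.logb 2 (p x * W x y / outDist W p y)|
        ≤ outDist W p y * (1 / (Real.exp 1 * Real.log 2)) :=
      key_abs (mul_nonneg (hp0 x) (hW0 x y)) hpWle hopos
    have hcnn' : 0 ≤ -Real.logb 2 (p x) := by
      have := Real.logb_nonpos (b := 2) one_lt_two (hp0 x) (hple x)
      linarith
    have habs2 : |p x * W x y * (-Real.logb 2 (p x))|
        ≤ outDist W p y * (-Real.logb 2 (p x)) := by
      rw [abs_of_nonneg (mul_nonneg (mul_nonneg (hp0 x) (hW0 x y)) hcnn')]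
      exact mul_le_mul_of_nonneg_right hpWle hcnn'
    calc |p x * W x y * Real.logb 2 (p x * W x y / outDist W p y)
          + p x * W x y * (-Real.logb 2 (p x))|
        ≤ |p x * W x y * Real.logb 2 (p x * W x y / outDist W p y)|
          + |p x * W x y * (-Real.logb 2 (p x))| := abs_add_le _ _
      _ ≤ outDist W p y * (1 / (Real.exp 1 * Real.log 2))
          + outDist W p y * (-Real.logb 2 (p x)) := add_le_add habs1 habs2
      _ = outDist W p y * (1 / (Real.exp 1 * Real.log 2) + -Real.logb 2 (p x)) := by ring

/-- Semi-bijective function: if `f` is a bijection from `A ⊆ Y` to `A' ⊆ Z`, maps `B = Aᶜ`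
into `B' = A'ᶜ`, and the output lands in `B` with probability at most `β̄` for every input,
then `I(U,p) − I(f(U),p) ≤ β̄ log₂|X| + 1/(e ln 2)`. -/
theorem MI_semi_bijective_loss
    {X Y Z : Type*} [Fintype X] [Countable Y] [Countable Z]
    (U : X → Y → ℝ) (f : Y → Z) (A : Set Y) [DecidablePred (· ∈ A)] (A' : Set Z)
    (hU0 : ∀ x y, 0 ≤ U x y) (hU1 : ∀ x, HasSum (U x) 1)
    (hbij : Set.BijOn f A A') (hB : Set.MapsTo f Aᶜ A'ᶜ)
    (βbar : ℝ)
    (hβ : ∀ x, (∑' y : Y, if y ∈ A then 0 else U x y) ≤ βbar)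
    (p : X → ℝ) (hp0 : ∀ x, 0 ≤ p x) (hp1 : ∑ x, p x = 1) :
    MI U p - MI (degrade U f) p ≤
      βbar * Real.logb 2 (Fintype.card X) + 1 / (Real.exp 1 * Real.log 2) := by
  classical
  have hlog2 : (0:ℝ) < Real.log 2 := Real.log_pos one_lt_two
  have he : (0:ℝ) < Real.exp 1 := Real.exp_pos 1
  set k : ℝ := 1 / (Real.exp 1 * Real.log 2) with hk_def
  have hk0 : 0 < k := by rw [hk_def]; positivity
  set V : X → Z → ℝ := degrade U f with hV_def
  -- basic facts
  have hXne : Nonempty X := by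
    by_contra h
    rw [not_nonempty_iff] at h
    rw [Finset.univ_eq_empty, Finset.sum_empty] at hp1
    exact one_ne_zero hp1.symm
  have hnpos : (0:ℝ) < (Fintype.card X : ℝ) := by exact_mod_cast Fintype.card_pos
  have hple : ∀ x, p x ≤ 1 := by
    intro x
    rw [← hp1]
    exact Finset.single_le_sum (fun i _ => hp0 i) (Finset.mem_univ x)
  set c : X → ℝ := fun x => if p x = 0 then 0 else -Real.logb 2 (p x) with hc_def
  have hc_app : ∀ x, c x = if p x = 0 then 0 else -Real.logb 2 (p x) := fun x => rfl
  have hc0 : ∀ x, 0 ≤ c x := by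
    intro x
    rw [hc_app]
    by_cases hpx : p x = 0
    · simp [hpx]
    · rw [if_neg hpx]
      have := Real.logb_nonpos (b := 2) one_lt_two (hp0 x) (hple x)
      linarith
  set C : ℝ := ∑ x, c x with hC_def
  have hcC : ∀ x, c x ≤ C := fun x =>
    Finset.single_le_sum (fun i _ => hc0 i) (Finset.mem_univ x)
  have hC0 : 0 ≤ C := Finset.sum_nonneg fun x _ => hc0 x
  -- channel facts
  have sU : ∀ x, Summable (U x) := fun x => (hU1 x).summable
  have hUsum : ∀ x, ∑' y, U x y = 1 := fun x => (hU1 x).tsum_eq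
  have hVhs : ∀ x, HasSum (V x) 1 := fun x => (hU1 x).tsum_fiberwise f
  have sV : ∀ x, Summable (V x) := fun x => (hVhs x).summable
  have hVsum : ∀ x, ∑' z, V x z = 1 := fun x => (hVhs x).tsum_eq
  have hV0 : ∀ x z, 0 ≤ V x z := fun x z => tsum_nonneg (fun y => hU0 x y)
  have hoU0 : ∀ y, 0 ≤ outDist U p y := outDist_nonneg U p hU0 hp0
  have hoV0 : ∀ z, 0 ≤ outDist V p z := outDist_nonneg V p hV0 hp0
  have hpUle : ∀ x y, p x * U x y ≤ outDist U p y := le_outDist U p hU0 hp0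
  have hpVle : ∀ x z, p x * V x z ≤ outDist V p z := le_outDist V p hV0 hp0
  have soU : Summable (outDist U p) := by
    have h : Summable (fun y => ∑ x, p x * U x y) :=
      summable_sum (fun x _ => (sU x).mul_left (p x))
    exact h.congr fun y => (outDist_eq U p y).symm
  have soV : Summable (outDist V p) := by
    have h : Summable (fun z => ∑ x, p x * V x z) :=
      summable_sum (fun x _ => (sV x).mul_left (p x))
    exact h.congr fun z => (outDist_eq V p z).symm
  have hoVsum : ∑' z, outDist V p z = 1 := by
    have h1 : ∑' z, outDist V p z = ∑ x, ∑' z, p x * V x z := by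
      rw [tsum_congr (outDist_eq V p)]
      exact Summable.tsum_finsetSum (fun x _ => (sV x).mul_left (p x))
    rw [h1]
    have h2 : ∀ x, ∑' z, p x * V x z = p x := by
      intro x; rw [tsum_mul_left, hVsum x, mul_one]
    rw [Finset.sum_congr rfl (fun x _ => h2 x), hp1]
  -- A-side identities
  have hfib : ∀ y ∈ A, f ⁻¹' {f y} = {y} := by
    intro y hy
    ext y'
    simp only [Set.mem_preimage, Set.mem_singleton_iff]
    constructor
    · intro hfy
      by_cases hy' : y' ∈ A
      · exact hbij.injOn hy' hy hfy
      · exact absurd (hfy ▸ hbij.mapsTo hy) (hB hy')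
    · rintro rfl; rfl
  have hVA : ∀ x, ∀ y ∈ A, V x (f y) = U x y := by
    intro x y hy
    show ∑' y' : (f ⁻¹' {f y}), U x y' = U x y
    rw [hfib y hy]
    exact tsum_singleton y (U x)
  have hoVA : ∀ y ∈ A, outDist V p (f y) = outDist U p y := by
    intro y hy
    rw [outDist_eq, outDist_eq]
    exact Finset.sum_congr rfl fun x _ => by rw [hVA x y hy]
  have hiA : ∀ x, ∀ y ∈ A,
      p x * V x (f y) * iDen V p x (f y) = p x * U x y * iDen U p x y := by
    intro x y hy
    rw [iDen, iDen, hVA x y hy, hoVA y hy]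
  -- summability on products
  have habsU : ∀ (x : X) (y : Y), |p x * U x y * iDen U p x y|
      ≤ (1:ℝ) * ((k + C) * outDist U p y) := by
    intro x y
    have h := term_abs_le U p hU0 hp0 hple x y
    calc |p x * U x y * iDen U p x y|
        ≤ outDist U p y * (1 / (Real.exp 1 * Real.log 2)
            + (if p x = 0 then 0 else -Real.logb 2 (p x))) := h
      _ = outDist U p y * (k + c x) := by rw [hc_app, hk_def]
      _ ≤ outDist U p y * (k + C) := by
          apply mul_le_mul_of_nonneg_left _ (hoU0 y)
          linarith [hcC x]
      _ = (1:ℝ) * ((k + C) * outDist U p y) := by ring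
  have habsV : ∀ (x : X) (z : Z), |p x * V x z * iDen V p x z|
      ≤ (1:ℝ) * ((k + C) * outDist V p z) := by
    intro x z
    have h := term_abs_le V p hV0 hp0 hple x z
    calc |p x * V x z * iDen V p x z|
        ≤ outDist V p z * (1 / (Real.exp 1 * Real.log 2)
            + (if p x = 0 then 0 else -Real.logb 2 (p x))) := h
      _ = outDist V p z * (k + c x) := by rw [hc_app, hk_def]
      _ ≤ outDist V p z * (k + C) := by
          apply mul_le_mul_of_nonneg_left _ (hoV0 z)
          linarith [hcC x]
      _ = (1:ℝ) * ((k + C) * outDist V p z) := by ring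
  have hkC0 : (0:ℝ) ≤ k + C := by linarith
  have sGU : Summable (fun xy : X × Y => p xy.1 * U xy.1 xy.2 * iDen U p xy.1 xy.2) := by
    have hb : Summable (fun xy : X × Y =>
        (fun _ : X => (1:ℝ)) xy.1 * ((fun y => (k + C) * outDist U p y) xy.2)) :=
      Summable.mul_of_nonneg Summable.of_finite (soU.mul_left (k + C))
        (fun _ => zero_le_one) (fun y => mul_nonneg hkC0 (hoU0 y))
    apply Summable.of_abs
    exact Summable.of_nonneg_of_le (fun xy => abs_nonneg _)
      (fun xy => habsU xy.1 xy.2) hb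
  have sGV : Summable (fun xz : X × Z => p xz.1 * V xz.1 xz.2 * iDen V p xz.1 xz.2) := by
    have hb : Summable (fun xz : X × Z =>
        (fun _ : X => (1:ℝ)) xz.1 * ((fun z => (k + C) * outDist V p z) xz.2)) :=
      Summable.mul_of_nonneg Summable.of_finite (soV.mul_left (k + C))
        (fun _ => zero_le_one) (fun z => mul_nonneg hkC0 (hoV0 z))
    apply Summable.of_abs
    exact Summable.of_nonneg_of_le (fun xz => abs_nonneg _)
      (fun xz => habsV xz.1 xz.2) hb
  -- decompose MI
  have hMIU : MI U p = ∑ x, ∑' y, p x * U x y * iDen U p x y := by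
    rw [MI, Summable.tsum_prod' sGU (fun x => sGU.prod_factor x), tsum_fintype]
  have hMIV : MI V p = ∑ x, ∑' z, p x * V x z * iDen V p x z := by
    rw [MI, Summable.tsum_prod' sGV (fun x => sGV.prod_factor x), tsum_fintype]
  have hsplitU : MI U p = (∑ x, ∑' y : ↥A, p x * U x ↑y * iDen U p x ↑y)
      + ∑ x, ∑' y : ↥(Aᶜ), p x * U x ↑y * iDen U p x ↑y := by
    rw [hMIU, ← Finset.sum_add_distrib]
    refine Finset.sum_congr rfl fun x _ => ?_
    exact (Summable.tsum_add_tsum_compl ((sGU.prod_factor x).subtype A)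
      ((sGU.prod_factor x).subtype Aᶜ)).symm
  have hsplitV : MI V p = (∑ x, ∑' z : ↥A', p x * V x ↑z * iDen V p x ↑z)
      + ∑ x, ∑' z : ↥(A'ᶜ), p x * V x ↑z * iDen V p x ↑z := by
    rw [hMIV, ← Finset.sum_add_distrib]
    refine Finset.sum_congr rfl fun x _ => ?_
    exact (Summable.tsum_add_tsum_compl ((sGV.prod_factor x).subtype A')
      ((sGV.prod_factor x).subtype A'ᶜ)).symm
  have hApart : ∀ x, ∑' z : ↥A', p x * V x ↑z * iDen V p x ↑z
      = ∑' y : ↥A, p x * U x ↑y * iDen U p x ↑y := by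
    intro x
    rw [← Equiv.tsum_eq (Set.BijOn.equiv f hbij)
      (fun z : ↥A' => p x * V x ↑z * iDen V p x ↑z)]
    refine tsum_congr fun y => ?_
    have hcoe : ((Set.BijOn.equiv f hbij y : ↥A') : Z) = f ↑y := rfl
    rw [hcoe]
    exact hiA x ↑y y.2
  have hdiff : MI U p - MI V p
      = ∑ x, ((∑' y : ↥(Aᶜ), p x * U x ↑y * iDen U p x ↑y)
        - ∑' z : ↥(A'ᶜ), p x * V x ↑z * iDen V p x ↑z) := by
    have hA2 : (∑ x, ∑' z : ↥A', p x * V x ↑z * iDen V p x ↑z)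
        = ∑ x, ∑' y : ↥A, p x * U x ↑y * iDen U p x ↑y :=
      Finset.sum_congr rfl fun x _ => hApart x
    rw [hsplitU, hsplitV, hA2, Finset.sum_sub_distrib]
    ring
  -- upper bound on B-part
  have hβbar0 : 0 ≤ βbar := by
    refine le_trans (tsum_nonneg fun y => ?_) (hβ (Classical.arbitrary X))
    by_cases hy : y ∈ A <;> simp [hy, hU0]
  have hUB : ∀ x, ∑' y : ↥(Aᶜ), p x * U x ↑y * iDen U p x ↑y ≤ βbar * (p x * c x) := by
    intro x
    have hsub1 : Summable (fun y : ↥(Aᶜ) => p x * U x ↑y * iDen U p x ↑y) :=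
      (sGU.prod_factor x).subtype _
    have hsub2 : Summable (fun y : ↥(Aᶜ) => p x * c x * U x ↑y) :=
      ((sU x).subtype _).mul_left (p x * c x)
    have h1 : ∑' y : ↥(Aᶜ), p x * U x ↑y * iDen U p x ↑y
        ≤ ∑' y : ↥(Aᶜ), p x * c x * U x ↑y := by
      refine Summable.tsum_le_tsum (fun y => ?_) hsub1 hsub2
      calc p x * U x ↑y * iDen U p x ↑y
          ≤ p x * U x ↑y * (if p x = 0 then 0 else -Real.logb 2 (p x)) :=
            term_le U p hU0 hp0 hple x ↑y
        _ = p x * c x * U x ↑y := by rw [← hc_app]; ring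
    have h2 : ∑' y : ↥(Aᶜ), p x * c x * U x ↑y
        = p x * c x * ∑' y : ↥(Aᶜ), U x ↑y := tsum_mul_left
    have hβx : ∑' y : ↥(Aᶜ), U x ↑y ≤ βbar := by
      rw [tsum_subtype (Aᶜ) (U x)]
      calc ∑' y, (Aᶜ).indicator (U x) y
          = ∑' y, if y ∈ A then 0 else U x y := by
            refine tsum_congr fun y => ?_
            rw [Set.indicator_apply]
            by_cases hy : y ∈ A <;> simp [hy]
        _ ≤ βbar := hβ x
    have hpc0 : 0 ≤ p x * c x := mul_nonneg (hp0 x) (hc0 x)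
    calc ∑' y : ↥(Aᶜ), p x * U x ↑y * iDen U p x ↑y
        ≤ p x * c x * ∑' y : ↥(Aᶜ), U x ↑y := h1.trans_eq h2
      _ ≤ p x * c x * βbar := mul_le_mul_of_nonneg_left hβx hpc0
      _ = βbar * (p x * c x) := by ring
  -- entropy bound
  have hent : ∑ x, p x * c x ≤ Real.logb 2 (Fintype.card X) := by
    have key : ∀ x ∈ Finset.univ, p x * c x ≤ Real.logb 2 (Fintype.card X) * p x
        + (1 / Real.log 2) * (((Fintype.card X : ℝ))⁻¹ - p x) := by
      intro x _
      by_cases hpx : p x = 0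
      · rw [hc_app, hpx]
        simp only [if_pos rfl, mul_zero, zero_mul, sub_zero, zero_add]
        positivity
      · have hppos : 0 < p x := (hp0 x).lt_of_ne (Ne.symm hpx)
        rw [hc_app, if_neg hpx]
        have hlog : -Real.log ((Fintype.card X : ℝ) * p x)
            ≤ ((Fintype.card X : ℝ) * p x)⁻¹ - 1 := by
          have h := Real.log_le_sub_one_of_pos
            (x := ((Fintype.card X : ℝ) * p x)⁻¹) (by positivity)
          rwa [Real.log_inv] at h
        have hmul := mul_le_mul_of_nonneg_left hlog (hp0 x)
        rw [Real.log_mul hnpos.ne' hpx] at hmul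
        have h3 : p x * ((Fintype.card X : ℝ) * p x)⁻¹ = ((Fintype.card X : ℝ))⁻¹ := by
          field_simp
        have G : -(p x * Real.log (p x)) ≤ p x * Real.log (Fintype.card X)
            + (((Fintype.card X : ℝ))⁻¹ - p x) := by nlinarith [hmul, h3]
        rw [← Real.log_div_log, ← Real.log_div_log]
        have G2 := mul_le_mul_of_nonneg_right G (inv_nonneg.mpr hlog2.le)
        have e1 : p x * -(Real.log (p x) / Real.log 2)
            = -(p x * Real.log (p x)) * (Real.log 2)⁻¹ := by ring
        have e2 : Real.log (Fintype.card X) / Real.log 2 * p x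
            + 1 / Real.log 2 * (((Fintype.card X : ℝ))⁻¹ - p x)
            = (p x * Real.log (Fintype.card X)
              + (((Fintype.card X : ℝ))⁻¹ - p x)) * (Real.log 2)⁻¹ := by ring
        rw [e1, e2]
        exact G2
    calc ∑ x, p x * c x
        ≤ ∑ x, (Real.logb 2 (Fintype.card X) * p x
            + (1 / Real.log 2) * (((Fintype.card X : ℝ))⁻¹ - p x)) :=
          Finset.sum_le_sum key
      _ = Real.logb 2 (Fintype.card X) * (∑ x, p x)
          + (1 / Real.log 2) * ((Fintype.card X : ℝ) * ((Fintype.card X : ℝ))⁻¹ - ∑ x, p x) := by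
          rw [Finset.sum_add_distrib, ← Finset.mul_sum, ← Finset.mul_sum,
            Finset.sum_sub_distrib, Finset.sum_const, Finset.card_univ, nsmul_eq_mul]
      _ = Real.logb 2 (Fintype.card X) := by
          rw [hp1, mul_one, mul_inv_cancel₀ hnpos.ne']
          ring
  -- lower bound on B'-part
  have hLB : ∀ x, -(p x * k) ≤ ∑' z : ↥(A'ᶜ), p x * V x ↑z * iDen V p x ↑z := by
    intro x
    by_cases hpx : p x = 0
    · have hz : ∀ z : ↥(A'ᶜ), p x * V x ↑z * iDen V p x ↑z = 0 :=
        fun z => by rw [hpx, zero_mul, zero_mul]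
      rw [tsum_congr hz, tsum_zero, hpx, zero_mul, neg_zero]
    · have hppos : 0 < p x := (hp0 x).lt_of_ne (Ne.symm hpx)
      have sVi : Summable (fun z : Z => V x z * iDen V p x z) := by
        have h := (sGV.prod_factor x).mul_left (p x)⁻¹
        refine h.congr fun z => ?_
        rw [← mul_assoc, ← mul_assoc, inv_mul_cancel₀ hpx, one_mul]
      have hfac : ∑' z : ↥(A'ᶜ), p x * V x ↑z * iDen V p x ↑z
          = p x * ∑' z : ↥(A'ᶜ), V x ↑z * iDen V p x ↑z := by
        rw [← tsum_mul_left]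
        exact tsum_congr fun z => by ring
      rw [hfac]
      have hinner : -k ≤ ∑' z : ↥(A'ᶜ), V x ↑z * iDen V p x ↑z := by
        set β := ∑' z : ↥(A'ᶜ), V x ↑z with hβ_def
        set γ := ∑' z : ↥(A'ᶜ), outDist V p ↑z with hγ_def
        have hβ0 : 0 ≤ β := tsum_nonneg fun z => hV0 x ↑z
        have hγ0 : 0 ≤ γ := tsum_nonneg fun z => hoV0 ↑z
        have hβ1 : β ≤ 1 := by
          have h := Summable.tsum_subtype_le (V x) (A'ᶜ) (fun z => hV0 x z) (sV x)
          rw [hVsum x] at h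
          exact h
        have hγ1 : γ ≤ 1 := by
          have h := Summable.tsum_subtype_le (outDist V p) (A'ᶜ) (fun z => hoV0 z) soV
          rw [hoVsum] at h
          exact h
        rcases hβ0.eq_or_lt with hβz | hβpos
        · have hzero : ∀ z : ↥(A'ᶜ), V x ↑z = 0 := by
            intro z
            have hle : V x ↑z ≤ β := by
              rw [hβ_def]
              exact Summable.le_tsum ((sV x).subtype _) z (fun z' _ => hV0 x ↑z')
            have := hV0 x ↑z
            linarith
          have hzs : (∑' z : ↥(A'ᶜ), V x ↑z * iDen V p x ↑z) = 0 := by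
            have h : ∀ z : ↥(A'ᶜ), V x ↑z * iDen V p x ↑z = 0 :=
              fun z => by rw [hzero z, zero_mul]
            rw [tsum_congr h, tsum_zero]
          rw [hzs]
          linarith [hk0]
        · have hγpos : 0 < γ := by
            have h1 : p x * β ≤ γ := by
              rw [hβ_def, hγ_def, ← tsum_mul_left]
              exact Summable.tsum_le_tsum (fun z => hpVle x ↑z)
                (((sV x).subtype _).mul_left (p x)) (soV.subtype _)
            exact lt_of_lt_of_le (mul_pos hppos hβpos) h1
          have hterm : ∀ z : ↥(A'ᶜ),
              (V x ↑z - outDist V p ↑z * (β / γ)) / Real.log 2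
                + V x ↑z * Real.logb 2 (β / γ)
              ≤ V x ↑z * iDen V p x ↑z := by
            intro z
            by_cases hVz : V x ↑z = 0
            · rw [hVz]
              simp only [zero_mul, zero_sub, add_zero]
              have h1 : 0 ≤ outDist V p ↑z * (β / γ) :=
                mul_nonneg (hoV0 _) (by positivity)
              exact div_nonpos_iff.mpr (Or.inr ⟨neg_nonpos.mpr h1, hlog2.le⟩)
            · have hVpos : 0 < V x ↑z := (hV0 x ↑z).lt_of_ne (Ne.symm hVz)
              have hoVpos : 0 < outDist V p ↑z :=
                lt_of_lt_of_le (mul_pos hppos hVpos) (hpVle x ↑z)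
              rw [iDen, if_neg (by push_neg; exact ⟨hVz, hoVpos.ne'⟩)]
              have hlogs : Real.logb 2 (V x ↑z / outDist V p ↑z) - Real.logb 2 (β / γ)
                  = Real.log ((V x ↑z * γ) / (outDist V p ↑z * β)) / Real.log 2 := by
                rw [← Real.log_div_log, ← Real.log_div_log, div_sub_div_same]
                congr 1
                rw [← Real.log_div (by positivity : V x ↑z / outDist V p ↑z ≠ 0)
                  (by positivity : (β / γ) ≠ 0)]
                congr 1
                field_simp
              have hln : 1 - (outDist V p ↑z * β) / (V x ↑z * γ)
                  ≤ Real.log ((V x ↑z * γ) / (outDist V p ↑z * β)) := by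
                have h := Real.log_le_sub_one_of_pos
                  (x := (outDist V p ↑z * β) / (V x ↑z * γ)) (by positivity)
                have hrw : Real.log ((outDist V p ↑z * β) / (V x ↑z * γ))
                    = -Real.log ((V x ↑z * γ) / (outDist V p ↑z * β)) := by
                  rw [← Real.log_inv, inv_div]
                rw [hrw] at h
                linarith
              have h2 : V x ↑z - outDist V p ↑z * (β / γ)
                  ≤ V x ↑z * Real.log ((V x ↑z * γ) / (outDist V p ↑z * β)) := by
                have hm := mul_le_mul_of_nonneg_left hln hVpos.le
                have hVln : V x ↑z * (1 - (outDist V p ↑z * β) / (V x ↑z * γ))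
                    = V x ↑z - outDist V p ↑z * (β / γ) := by
                  field_simp
                rw [hVln] at hm
                exact hm
              have h5 : (V x ↑z - outDist V p ↑z * (β / γ)) / Real.log 2
                  ≤ (V x ↑z * Real.log ((V x ↑z * γ) / (outDist V p ↑z * β)))
                    / Real.log 2 := by gcongr
              have h3 : V x ↑z * Real.logb 2 (V x ↑z / outDist V p ↑z)
                  - V x ↑z * Real.logb 2 (β / γ)
                  = (V x ↑z * Real.log ((V x ↑z * γ) / (outDist V p ↑z * β)))
                    / Real.log 2 := by
                rw [← mul_sub, hlogs]
                ring
              linarith [h5, h3]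
          have hsVs : Summable (fun z : ↥(A'ᶜ) => V x ↑z) := (sV x).subtype _
          have hsoVs : Summable (fun z : ↥(A'ᶜ) => outDist V p ↑z) := soV.subtype _
          have hs1 : Summable (fun z : ↥(A'ᶜ) =>
              (V x ↑z - outDist V p ↑z * (β / γ)) / Real.log 2) :=
            (hsVs.sub (hsoVs.mul_right (β / γ))).div_const _
          have hs2 : Summable (fun z : ↥(A'ᶜ) => V x ↑z * Real.logb 2 (β / γ)) :=
            hsVs.mul_right _
          have hsVis : Summable (fun z : ↥(A'ᶜ) => V x ↑z * iDen V p x ↑z) :=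
            sVi.subtype _
          have hts := Summable.tsum_le_tsum hterm (hs1.add hs2) hsVis
          have hlhs : ∑' z : ↥(A'ᶜ), ((V x ↑z - outDist V p ↑z * (β / γ)) / Real.log 2
              + V x ↑z * Real.logb 2 (β / γ)) = β * Real.logb 2 (β / γ) := by
            rw [Summable.tsum_add hs1 hs2, tsum_div_const,
              Summable.tsum_sub hsVs (hsoVs.mul_right (β / γ)), tsum_mul_right, tsum_mul_right,
              ← hβ_def, ← hγ_def, mul_comm γ (β / γ), div_mul_cancel₀ _ hγpos.ne']
            simp
          rw [hlhs] at hts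
          have hfinal : -k ≤ β * Real.logb 2 (β / γ) := by
            have h1 : Real.logb 2 γ ≤ 0 := Real.logb_nonpos one_lt_two hγ0 hγ1
            have h2 : Real.logb 2 (β / γ) = Real.logb 2 β - Real.logb 2 γ :=
              Real.logb_div hβpos.ne' hγpos.ne'
            have h3 : -k ≤ β * Real.logb 2 β := by
              have h4 := key_lb (a := β) (b := 1) hβ0 one_pos
              rw [div_one, one_mul, ← hk_def] at h4
              exact h4
            rw [h2]
            nlinarith [mul_nonneg hβ0 (neg_nonneg.mpr h1)]
          linarith [hts, hfinal]
      calc -(p x * k) = p x * (-k) := by ring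
        _ ≤ p x * ∑' z : ↥(A'ᶜ), V x ↑z * iDen V p x ↑z :=
          mul_le_mul_of_nonneg_left hinner hppos.le
  -- assemble
  rw [hdiff]
  calc ∑ x, ((∑' y : ↥(Aᶜ), p x * U x ↑y * iDen U p x ↑y)
        - ∑' z : ↥(A'ᶜ), p x * V x ↑z * iDen V p x ↑z)
      ≤ ∑ x, (βbar * (p x * c x) + p x * k) := by
        refine Finset.sum_le_sum fun x _ => ?_
        have h1 := hUB x
        have h2 := hLB x
        linarith
    _ = βbar * (∑ x, p x * c x) + (∑ x, p x) * k := by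
        rw [Finset.sum_add_distrib, Finset.mul_sum, Finset.sum_mul]
    _ ≤ βbar * Real.logb 2 (Fintype.card X) + 1 * k := by
        have := mul_le_mul_of_nonneg_left hent hβbar0
        rw [hp1]
        linarith
    _ = βbar * Real.logb 2 (Fintype.card X) + k := by rw [one_mul]
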